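/- arXiv:1901.09077 — 2 statements merged into one kernel-verified Lean document; each statement's English description precedes it below -/
import Mathlib

section
/- Let X, Y be pseudometric spaces of diameter ≤ 1, Y × X with the max metric, and let R be an ε-predicate on Y × X with associated function f_R : Y × X → [0,1]. Then the function x ↦ inf_{y ∈ Y} f_R(y,x) is uniformly continuous with modulus ε, and the ε-predicate it corresponds to is the smallest ε-predicate on X containing the family r ↦ { x | ∃ y, (y,x) ∈ R(r) }. -/
open Set

/-- A pseudometric space of diameter ≤ 1. -/
structure PMet where
  carrier : Type
  d : carrier → carrier → ℝ
  d_self : ∀ x, d x x = 0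
  d_symm : ∀ x y, d x y = d y x
  d_triangle : ∀ x y z, d x z ≤ d x y + d y z
  d_nonneg : ∀ x y, 0 ≤ d x y
  d_le_one : ∀ x y, d x y ≤ 1

/-- Uniform continuity of a map between diameter-≤1 pseudometric spaces. -/
def UnifCont (X Y : PMet) (f : X.carrier → Y.carrier) : Prop :=
  ∀ e : ℝ, 0 < e → ∃ δ : ℝ, 0 < δ ∧ ∀ x y, X.d x y < δ → Y.d (f x) (f y) < e

/-- A modulus of uniform continuity: increasing, infima-preserving, fixing 0,
    mapping [0,1] into [0,1]. -/
def IsModulus (μ : ℝ → ℝ) : Prop :=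
  μ 0 = 0 ∧
  (∀ r ∈ Icc (0:ℝ) 1, μ r ∈ Icc (0:ℝ) 1) ∧
  (∀ r s, r ∈ Icc (0:ℝ) 1 → s ∈ Icc (0:ℝ) 1 → r ≤ s → μ r ≤ μ s) ∧
  (∀ S : Set ℝ, S.Nonempty → S ⊆ Icc (0:ℝ) 1 → μ (sInf S) = sInf (μ '' S))

/-- `f` is uniformly continuous with modulus `μ`. -/
def HasModulus (X Y : PMet) (f : X.carrier → Y.carrier) (μ : ℝ → ℝ) : Prop :=
  ∀ x y, Y.d (f x) (f y) ≤ μ (X.d x y)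

/-- An ε-predicate on `X`: a monotone family of subsets, preserving nonempty
    infima as intersections, satisfying the ε-continuity condition
    (with truncated addition on [0,1]). -/
def IsPred (X : PMet) (μ : ℝ → ℝ) (R : ℝ → Set X.carrier) : Prop :=
  (∀ r s, r ∈ Icc (0:ℝ) 1 → s ∈ Icc (0:ℝ) 1 → r ≤ s → R r ⊆ R s) ∧
  (∀ S : Set ℝ, S.Nonempty → S ⊆ Icc (0:ℝ) 1 → R (sInf S) = ⋂ r ∈ S, R r) ∧
  (∀ r s, r ∈ Icc (0:ℝ) 1 → s ∈ Icc (0:ℝ) 1 → ∀ x y, x ∈ R r → X.d x y ≤ s →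
     y ∈ R (min (r + μ s) 1))

/-- The product pseudometric space with the max metric. -/
def prodPMet (Y Z : PMet) : PMet where
  carrier := Y.carrier × Z.carrier
  d p q := max (Y.d p.1 q.1) (Z.d p.2 q.2)
  d_self p := by simp [Y.d_self, Z.d_self]
  d_symm p q := by rw [Y.d_symm, Z.d_symm]
  d_triangle p q r := max_le
    (le_trans (Y.d_triangle _ _ _) (add_le_add (le_max_left _ _) (le_max_left _ _)))
    (le_trans (Z.d_triangle _ _ _) (add_le_add (le_max_right _ _) (le_max_right _ _)))
  d_nonneg p q := le_trans (Y.d_nonneg _ _) (le_max_left _ _)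
  d_le_one p q := max_le (Y.d_le_one _ _) (Z.d_le_one _ _)

/-!
The level function `f_R p = inf {r | p ∈ R r}` of an ε-predicate recovers it (`f_R p ≤ r ↔ p ∈ R r`,
because `R` turns infima into intersections) and is ε-continuous by the ε-continuity condition.
Taking the infimum over `y` along fibres of constant `y`, where the max metric is the metric of `X`,
keeps the ε-continuity, so the sublevel sets of `g = inf_y f_R(y, ·)` form an ε-predicate. It contains
the existential image of `R` since `g ≤ f_R(y, ·)`, and it is the smallest one: `g x ≤ r` gives
`x ∈ ∃y R(t)` for every `t > r`, and an ε-predicate `P` turns `⋂_{t ∈ (r,1]} P t` into `P r`.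
-/

section LevelFunction

variable {Z : PMet} {μ : ℝ → ℝ} {R : ℝ → Set Z.carrier}

noncomputable def levelFun (R : ℝ → Set Z.carrier) (p : Z.carrier) : ℝ :=
  sInf {r | r ∈ Icc (0:ℝ) 1 ∧ p ∈ R r}

lemma levelSet_nonempty (hR1 : R 1 = univ) (p : Z.carrier) :
    {r | r ∈ Icc (0:ℝ) 1 ∧ p ∈ R r}.Nonempty :=
  ⟨1, right_mem_Icc.2 zero_le_one, hR1 ▸ mem_univ p⟩

lemma levelSet_bddBelow (p : Z.carrier) : BddBelow {r | r ∈ Icc (0:ℝ) 1 ∧ p ∈ R r} :=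
  ⟨0, fun _ hr => hr.1.1⟩

lemma levelFun_mem_Icc (hR1 : R 1 = univ) (p : Z.carrier) : levelFun R p ∈ Icc (0:ℝ) 1 :=
  ⟨le_csInf (levelSet_nonempty hR1 p) fun _ hr => hr.1.1,
    csInf_le (levelSet_bddBelow p) ⟨right_mem_Icc.2 zero_le_one, hR1 ▸ mem_univ p⟩⟩

lemma mem_levelFun (hR : IsPred Z μ R) (hR1 : R 1 = univ) (p : Z.carrier) :
    p ∈ R (levelFun R p) := by
  rw [levelFun, hR.2.1 _ (levelSet_nonempty hR1 p) fun _ hr => hr.1]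
  exact mem_iInter₂.2 fun _ hr => hr.2

lemma levelFun_le_iff (hR : IsPred Z μ R) (hR1 : R 1 = univ) {p : Z.carrier} {r : ℝ}
    (hr : r ∈ Icc (0:ℝ) 1) : levelFun R p ≤ r ↔ p ∈ R r :=
  ⟨fun h => hR.1 _ _ (levelFun_mem_Icc hR1 p) hr h (mem_levelFun hR hR1 p),
    fun h => csInf_le (levelSet_bddBelow p) ⟨hr, h⟩⟩

lemma levelFun_le_add (hμ : IsModulus μ) (hR : IsPred Z μ R) (hR1 : R 1 = univ)
    (p q : Z.carrier) : levelFun R q ≤ levelFun R p + μ (Z.d p q) := by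
  have hd : Z.d p q ∈ Icc (0:ℝ) 1 := ⟨Z.d_nonneg p q, Z.d_le_one p q⟩
  have hmin : min (levelFun R p + μ (Z.d p q)) 1 ∈ Icc (0:ℝ) 1 :=
    ⟨le_min (add_nonneg (levelFun_mem_Icc hR1 p).1 (hμ.2.1 _ hd).1) zero_le_one,
      min_le_right _ _⟩
  have hq := hR.2.2 _ _ (levelFun_mem_Icc hR1 p) hd p q (mem_levelFun hR hR1 p) le_rfl
  exact ((levelFun_le_iff hR hR1 hmin).2 hq).trans (min_le_left _ _)

end LevelFunction

lemma prodPMet_d_mk_left (Y X : PMet) (y : Y.carrier) (x x' : X.carrier) :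
    (prodPMet Y X).d (y, x) (y, x') = X.d x x' := by
  change max (Y.d y y) (X.d x x') = X.d x x'
  rw [Y.d_self, max_eq_right (X.d_nonneg x x')]

lemma iInf_fibre_le_add {X Y : PMet} [Nonempty Y.carrier] {μ : ℝ → ℝ}
    {f : (prodPMet Y X).carrier → ℝ} (hf0 : ∀ p, 0 ≤ f p)
    (hf : ∀ p q, f q ≤ f p + μ ((prodPMet Y X).d p q)) (x x' : X.carrier) :
    ⨅ y, f (y, x') ≤ (⨅ y, f (y, x)) + μ (X.d x x') := by
  have hbdd : ∀ x : X.carrier, BddBelow (range fun y => f (y, x)) :=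
    fun _ => ⟨0, forall_mem_range.2 fun _ => hf0 _⟩
  rw [← sub_le_iff_le_add]
  refine le_ciInf fun y => sub_le_iff_le_add.2 ?_
  calc ⨅ y, f (y, x') ≤ f (y, x') := ciInf_le (hbdd x') y
    _ ≤ f (y, x) + μ (X.d x x') := prodPMet_d_mk_left Y X y x x' ▸ hf (y, x) (y, x')

lemma abs_sub_le_of_le_add {X : PMet} {μ : ℝ → ℝ} {g : X.carrier → ℝ}
    (hg : ∀ x x', g x' ≤ g x + μ (X.d x x')) (x x' : X.carrier) :
    |g x - g x'| ≤ μ (X.d x x') := by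
  have h := hg x' x
  rw [X.d_symm] at h
  exact abs_sub_le_iff.2 ⟨by linarith, by linarith [hg x x']⟩

lemma isPred_sublevel {X : PMet} {μ : ℝ → ℝ} (hμ : IsModulus μ) {g : X.carrier → ℝ}
    (hg1 : ∀ x, g x ≤ 1) (hg : ∀ x x', g x' ≤ g x + μ (X.d x x')) :
    IsPred X μ (fun r => {x | g x ≤ r}) := by
  refine ⟨fun r s _ _ hrs x hx => le_trans hx hrs, fun S hS hS01 => ?_, ?_⟩
  · ext x
    simp only [mem_ofPred_eq, mem_iInter]
    exact ⟨fun h r hr => h.trans (csInf_le ⟨0, fun t ht => (hS01 ht).1⟩ hr),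
      le_csInf hS⟩
  · intro r s _ hs x x' hx hd
    have hμd := hμ.2.2.1 _ _ ⟨X.d_nonneg x x', X.d_le_one x x'⟩ hs hd
    exact le_min (by linarith [hg x x', mem_ofPred.1 hx]) (hg1 x')

lemma IsPred.sublevel_subset {X : PMet} {μ : ℝ → ℝ} {P : ℝ → Set X.carrier}
    (hP : IsPred X μ P) (hP1 : P 1 = univ) {g : X.carrier → ℝ}
    (hlt : ∀ t ∈ Icc (0:ℝ) 1, {x | g x < t} ⊆ P t) :
    ∀ r ∈ Icc (0:ℝ) 1, {x | g x ≤ r} ⊆ P r := by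
  intro r hr x hx
  rcases hr.2.eq_or_lt with rfl | hr1
  · exact hP1 ▸ mem_univ x
  have hsub : Ioc r 1 ⊆ Icc (0:ℝ) 1 := fun t ht => ⟨hr.1.trans ht.1.le, ht.2⟩
  rw [← csInf_Ioc hr1, hP.2.1 _ (nonempty_Ioc.2 hr1) hsub]
  exact mem_iInter₂.2 fun t ht => hlt t (hsub ht) (lt_of_le_of_lt hx ht.1)

/-- infimum over Y of f_R is uniformly continuous with modulus ε and
    corresponds to the smallest ε-predicate containing the existential image of R. -/
theorem exists_quantifier (X Y : PMet) [Nonempty Y.carrier] (ε : ℝ → ℝ)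
    (hε : IsModulus ε) (R : ℝ → Set (prodPMet Y X).carrier)
    (hR : IsPred (prodPMet Y X) ε R) (hR1 : R 1 = Set.univ) :
    let fR : (prodPMet Y X).carrier → ℝ :=
      fun p => sInf {r | r ∈ Icc (0:ℝ) 1 ∧ p ∈ R r}
    let g : X.carrier → ℝ :=
      fun x => sInf (Set.range fun y : Y.carrier =>
        fR ((y, x) : (prodPMet Y X).carrier))
    (∀ x x', |g x - g x'| ≤ ε (X.d x x')) ∧
    IsPred X ε (fun r => {x | g x ≤ r}) ∧
    (∀ r ∈ Icc (0:ℝ) 1,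
      {x | ∃ y : Y.carrier, ((y, x) : (prodPMet Y X).carrier) ∈ R r} ⊆
        {x | g x ≤ r}) ∧
    (∀ P : ℝ → Set X.carrier, IsPred X ε P →
      (∀ r ∈ Icc (0:ℝ) 1,
        {x | ∃ y : Y.carrier, ((y, x) : (prodPMet Y X).carrier) ∈ R r} ⊆ P r) →
      ∀ r ∈ Icc (0:ℝ) 1, {x | g x ≤ r} ⊆ P r) := by
  change let g : X.carrier → ℝ := fun x => ⨅ y, levelFun R (y, x); _
  intro g
  have hbdd (x : X.carrier) : BddBelow (range fun y => levelFun R (y, x)) :=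
    ⟨0, forall_mem_range.2 fun _ => (levelFun_mem_Icc hR1 _).1⟩
  have hg1 (x : X.carrier) : g x ≤ 1 :=
    (ciInf_le (hbdd x) (Classical.arbitrary _)).trans (levelFun_mem_Icc hR1 _).2
  have hg : ∀ x x', g x' ≤ g x + ε (X.d x x') :=
    iInf_fibre_le_add (fun p => (levelFun_mem_Icc hR1 p).1) (levelFun_le_add hε hR hR1)
  refine ⟨abs_sub_le_of_le_add hg, isPred_sublevel hε hg1 hg,
    fun r hr x ⟨y, hy⟩ => (ciInf_le (hbdd x) y).trans ((levelFun_le_iff hR hR1 hr).2 hy),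
    fun P hP hRP => hP.sublevel_subset ?_ fun t ht x hx => hRP t ht ?_⟩
  · exact eq_univ_of_forall fun x =>
      hRP 1 (right_mem_Icc.2 zero_le_one) ⟨Classical.arbitrary _, hR1 ▸ mem_univ _⟩
  · obtain ⟨y, hy⟩ := exists_lt_of_ciInf_lt (show g x < t from hx)
    exact ⟨y, (levelFun_le_iff hR hR1 ht).1 hy.le⟩
end

section
/- Let X, Y be pseudometric spaces of diameter ≤ 1 with Y nonempty, Y × X with the max metric, and let R be an ε-predicate on Y × X. Then the family Q(r) = { x ∈ X | ∀ y ∈ Y, (y,x) ∈ R(r) } is itself an ε-predicate on X, and its associated function f_Q satisfies f_Q(x) = sup_{y ∈ Y} f_R(y,x); in particular x ↦ sup_{y ∈ Y} f_R(y,x) is uniformly continuous with modulus ε. -/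
open Set

section Aux
variable (X : PMet) (ε : ℝ → ℝ) (Q : ℝ → Set X.carrier)

lemma one_mem_aux (hQ1 : Q 1 = Set.univ) (x : X.carrier) :
    (1:ℝ) ∈ {r | r ∈ Icc (0:ℝ) 1 ∧ x ∈ Q r} :=
  ⟨⟨zero_le_one, le_refl 1⟩, by simp [hQ1]⟩

lemma bdd_aux (x : X.carrier) : BddBelow {r | r ∈ Icc (0:ℝ) 1 ∧ x ∈ Q r} :=
  ⟨0, fun r hr => hr.1.1⟩

lemma fval_mem_Icc (hQ1 : Q 1 = Set.univ) (x : X.carrier) :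
    sInf {r | r ∈ Icc (0:ℝ) 1 ∧ x ∈ Q r} ∈ Icc (0:ℝ) 1 :=
  ⟨le_csInf ⟨1, one_mem_aux X Q hQ1 x⟩ (fun r hr => hr.1.1),
   csInf_le (bdd_aux X Q x) (one_mem_aux X Q hQ1 x)⟩

lemma mem_Q_fval (hQ : IsPred X ε Q) (hQ1 : Q 1 = Set.univ) (x : X.carrier) :
    x ∈ Q (sInf {r | r ∈ Icc (0:ℝ) 1 ∧ x ∈ Q r}) := by
  rw [hQ.2.1 _ ⟨1, one_mem_aux X Q hQ1 x⟩ (fun r hr => hr.1)]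
  exact mem_iInter₂.2 fun r hr => hr.2

lemma fval_le (x : X.carrier) {r : ℝ} (hr : r ∈ Icc (0:ℝ) 1) (hx : x ∈ Q r) :
    sInf {r | r ∈ Icc (0:ℝ) 1 ∧ x ∈ Q r} ≤ r :=
  csInf_le (bdd_aux X Q x) ⟨hr, hx⟩

lemma mem_Q_iff (hQ : IsPred X ε Q) (hQ1 : Q 1 = Set.univ) (x : X.carrier)
    {r : ℝ} (hr : r ∈ Icc (0:ℝ) 1) :
    x ∈ Q r ↔ sInf {r | r ∈ Icc (0:ℝ) 1 ∧ x ∈ Q r} ≤ r := by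
  constructor
  · exact fval_le X Q x hr
  · intro h
    exact hQ.1 _ _ (fval_mem_Icc X Q hQ1 x) hr h (mem_Q_fval X ε Q hQ hQ1 x)

lemma lip_aux (hε : IsModulus ε) (hQ : IsPred X ε Q) (hQ1 : Q 1 = Set.univ)
    (x y : X.carrier) :
    sInf {r | r ∈ Icc (0:ℝ) 1 ∧ y ∈ Q r} ≤
      sInf {r | r ∈ Icc (0:ℝ) 1 ∧ x ∈ Q r} + ε (X.d x y) := by
  set r := sInf {r | r ∈ Icc (0:ℝ) 1 ∧ x ∈ Q r} with hrdef
  have hrIcc := fval_mem_Icc X Q hQ1 x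
  have hsIcc : X.d x y ∈ Icc (0:ℝ) 1 := ⟨X.d_nonneg x y, X.d_le_one x y⟩
  have hεs : ε (X.d x y) ∈ Icc (0:ℝ) 1 := hε.2.1 _ hsIcc
  have hy : y ∈ Q (min (r + ε (X.d x y)) 1) :=
    hQ.2.2 r (X.d x y) hrIcc hsIcc x y (mem_Q_fval X ε Q hQ hQ1 x) le_rfl
  have hmin : min (r + ε (X.d x y)) 1 ∈ Icc (0:ℝ) 1 :=
    ⟨le_min (add_nonneg hrIcc.1 hεs.1) zero_le_one, min_le_right _ _⟩
  exact le_trans (fval_le X Q y hmin hy) (min_le_left _ _)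

end Aux

/-- the universally quantified family is an ε-predicate whose
    associated function is the supremum over Y of f_R. -/
theorem forall_quantifier (X Y : PMet) [Nonempty Y.carrier] (ε : ℝ → ℝ)
    (hε : IsModulus ε) (R : ℝ → Set (prodPMet Y X).carrier)
    (hR : IsPred (prodPMet Y X) ε R) (hR1 : R 1 = Set.univ) :
    let fR : (prodPMet Y X).carrier → ℝ :=
      fun p => sInf {r | r ∈ Icc (0:ℝ) 1 ∧ p ∈ R r}
    let Q : ℝ → Set X.carrier :=
      fun r => {x | ∀ y : Y.carrier, ((y, x) : (prodPMet Y X).carrier) ∈ R r}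
    let fQ : X.carrier → ℝ :=
      fun x => sInf {r | r ∈ Icc (0:ℝ) 1 ∧ x ∈ Q r}
    IsPred X ε Q ∧
    (∀ x, fQ x = sSup (Set.range fun y : Y.carrier =>
      fR ((y, x) : (prodPMet Y X).carrier))) ∧
    (∀ x x', |fQ x - fQ x'| ≤ ε (X.d x x')) := by
  intro fR Q fQ
  have hQ1 : Q 1 = Set.univ := by
    ext x
    simp only [Q, mem_setOf_eq, hR1, Set.mem_univ, iff_true]
    intro y; trivial
  have hQ : IsPred X ε Q := by
    refine ⟨?_, ?_, ?_⟩
    · intro r s hr hs hrs x hx y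
      exact hR.1 r s hr hs hrs (hx y)
    · intro S hS hS1
      ext x
      simp only [Q, mem_setOf_eq, hR.2.1 S hS hS1]
      constructor
      · intro h
        exact mem_iInter₂.2 fun r hr y => mem_iInter₂.1 (h y) r hr
      · intro h y
        exact mem_iInter₂.2 fun r hr => mem_iInter₂.1 h r hr y
    · intro r s hr hs x x' hx hd y
      have hdle : (prodPMet Y X).d (y, x) (y, x') ≤ s := by
        have heq : (prodPMet Y X).d (y, x) (y, x') = X.d x x' := by
          simp [prodPMet, Y.d_self, max_eq_right (X.d_nonneg x x')]
        rw [heq]; exact hd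
      exact hR.2.2 r s hr hs (y, x) (y, x') (hx y) hdle
  have hsup : ∀ x, fQ x = sSup (Set.range fun y : Y.carrier => fR (y, x)) := by
    intro x
    have hne : (Set.range fun y : Y.carrier => fR (y, x)).Nonempty :=
      Set.range_nonempty _
    have hfRIcc : ∀ y : Y.carrier, fR (y, x) ∈ Icc (0:ℝ) 1 := fun y =>
      fval_mem_Icc (prodPMet Y X) R hR1 (y, x)
    have hbdd : BddAbove (Set.range fun y : Y.carrier => fR (y, x)) :=
      ⟨1, by rintro _ ⟨y, rfl⟩; exact (hfRIcc y).2⟩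
    set M := sSup (Set.range fun y : Y.carrier => fR (y, x)) with hM
    have hMIcc : M ∈ Icc (0:ℝ) 1 := by
      constructor
      · obtain ⟨y⟩ := ‹Nonempty Y.carrier›
        exact le_trans (hfRIcc y).1 (le_csSup hbdd ⟨y, rfl⟩)
      · exact csSup_le hne (by rintro _ ⟨y, rfl⟩; exact (hfRIcc y).2)
    have key : ∀ r ∈ Icc (0:ℝ) 1, (x ∈ Q r ↔ M ≤ r) := by
      intro r hr
      have h1 : (x ∈ Q r) ↔ ∀ y, fR (y, x) ≤ r :=
        ⟨fun h y => fval_le (prodPMet Y X) R (y, x) hr (h y),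
         fun h y => (mem_Q_iff (prodPMet Y X) ε R hR hR1 (y, x) hr).2 (h y)⟩
      rw [h1, hM, csSup_le_iff hbdd hne]
      constructor
      · rintro h _ ⟨y, rfl⟩; exact h y
      · intro h y; exact h _ ⟨y, rfl⟩
    have hset : {r | r ∈ Icc (0:ℝ) 1 ∧ x ∈ Q r} = {r | r ∈ Icc (0:ℝ) 1 ∧ M ≤ r} := by
      ext r; exact and_congr_right fun hr => key r hr
    show sInf {r | r ∈ Icc (0:ℝ) 1 ∧ x ∈ Q r} = M
    rw [hset]
    apply le_antisymm
    · exact csInf_le ⟨0, fun r hr => hr.1.1⟩ ⟨hMIcc, le_rfl⟩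
    · exact le_csInf ⟨1, ⟨⟨zero_le_one, le_rfl⟩, hMIcc.2⟩⟩ fun r hr => hr.2
  refine ⟨hQ, hsup, fun x x' => ?_⟩
  rw [abs_sub_le_iff]
  constructor
  · have h := lip_aux X ε Q hε hQ hQ1 x' x
    rw [X.d_symm x' x] at h
    have h2 : fQ x ≤ fQ x' + ε (X.d x x') := h
    linarith
  · have h := lip_aux X ε Q hε hQ hQ1 x x'
    have h2 : fQ x' ≤ fQ x + ε (X.d x x') := h
    linarith
end
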